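/- Let f(x) = ∑_{m=1}^{∞} (1 − (1 − 2^{−m})^{2^x}) for real x. For every real x with 0 ≤ x < 1, as the integer k → ∞, f(x+k) − (x+k) converges to −x − ∑_{m=−∞}^{0} exp(−2^{x−m}) + ∑_{m=1}^{∞} (1 − exp(−2^{x−m})). -/

import Mathlib

open Real Filter

/-- `f(x) = ∑_{m=1}^∞ (1 - (1 - 2^{-m})^{2^x})`, the sum over `m ≥ 1`
reindexed by `m = j+1`, `j : ℕ`; the exponent `2^x` is a real power. -/
noncomputable def f (x : ℝ) : ℝ :=
  ∑' j : ℕ, (1 - (1 - (2 : ℝ)⁻¹ ^ (j + 1)) ^ ((2 : ℝ) ^ x))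

/-!
Write `N = 2^y` and `t_j = 2^{-(j+1)}`. Replacing each `(1 - t_j)^N` in `f y` by
`exp (-N t_j) = exp (-2^{y-j-1})` changes the `j`-th term by at most `2 t_j`, and by at most
`exp (-N t_j)`, which tends to `0` as `y → ∞`; by dominated convergence the total change tends
to `0`. The resulting series `fPoisson` behaves exactly under integer shifts: in
`fPoisson (x + k)` the first `k` terms are `1 - exp (-2^{x+i})`, `i < k`, and the others form
`fPoisson x`. Hence `f (x + k) - k = fPoisson x - ∑_{i<k} exp (-2^{x+i}) + o(1)`.
-/

open Topology Finset

namespace Real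

theorem one_sub_rpow_le_exp_neg_mul {t N : ℝ} (ht : t ≤ 1) (hN : 0 ≤ N) :
    (1 - t) ^ N ≤ exp (-(N * t)) := by
  calc (1 - t) ^ N ≤ exp (-t) ^ N :=
        rpow_le_rpow (by linarith) (one_sub_le_exp_neg t) hN
    _ = exp (-(N * t)) := by rw [← exp_mul, neg_mul, mul_comm]

theorem neg_log_one_sub_sub_le {t : ℝ} (ht0 : 0 ≤ t) (ht : t ≤ 1 / 2) :
    -log (1 - t) - t ≤ 2 * t ^ 2 := by
  have h := abs_log_sub_add_sum_range_le (x := t) (by rw [abs_of_nonneg ht0]; linarith) 1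
  simp only [range_one, sum_singleton, zero_add, pow_one, Nat.cast_zero, div_one,
    abs_of_nonneg ht0] at h
  have : t ^ 2 / (1 - t) ≤ 2 * t ^ 2 := by
    rw [div_le_iff₀ (by linarith)]; nlinarith
  linarith [(abs_le.mp h).1]

theorem exp_neg_mul_sub_one_sub_rpow_le {t N : ℝ} (ht0 : 0 ≤ t) (ht : t ≤ 1 / 2)
    (hN : 0 ≤ N) : exp (-(N * t)) - (1 - t) ^ N ≤ 2 * t := by
  set δ := -log (1 - t) - t
  have hδ0 : 0 ≤ δ := by linarith [log_le_sub_one_of_pos (x := 1 - t) (by linarith)]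
  have hpow : (1 - t) ^ N = exp (-(N * t)) * exp (-(N * δ)) := by
    rw [rpow_def_of_pos (by linarith), ← exp_add]
    congr 1
    ring
  have hE := exp_pos (-(N * t))
  have hNδ : 1 - exp (-(N * δ)) ≤ N * δ := by linarith [one_sub_le_exp_neg (N * δ)]
  -- `u e^{-u} ≤ 1` at `u = N t` absorbs the factor `N` in `N δ ≤ 2 N t²`.
  have hNt : N * t * exp (-(N * t)) ≤ 1 := by
    linarith [mul_exp_neg_le_exp_neg_one (N * t), exp_le_one_iff.mpr (neg_nonpos.mpr zero_le_one)]
  calc exp (-(N * t)) - (1 - t) ^ N = exp (-(N * t)) * (1 - exp (-(N * δ))) := by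
        rw [hpow]; ring
    _ ≤ exp (-(N * t)) * (N * (2 * t ^ 2)) := by
        gcongr
        exact hNδ.trans (mul_le_mul_of_nonneg_left (neg_log_one_sub_sub_le ht0 ht) hN)
    _ = 2 * t * (N * t * exp (-(N * t))) := by ring
    _ ≤ 2 * t := mul_le_of_le_one_right (by positivity) hNt

end Real

theorem summable_exp_neg_mul_sub_one_sub_rpow {t : ℕ → ℝ} {N : ℝ} (ht : Summable t)
    (ht0 : ∀ j, 0 ≤ t j) (ht1 : ∀ j, t j ≤ 1 / 2) (hN : 0 ≤ N) :
    Summable fun j => exp (-(N * t j)) - (1 - t j) ^ N :=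
  (ht.mul_left 2).of_nonneg_of_le
    (fun j => sub_nonneg.mpr (one_sub_rpow_le_exp_neg_mul (by linarith [ht1 j]) hN))
    (fun j => exp_neg_mul_sub_one_sub_rpow_le (ht0 j) (ht1 j) hN)

theorem tendsto_tsum_exp_neg_mul_sub_one_sub_rpow {ι : Type*} {l : Filter ι} {t : ℕ → ℝ}
    {N : ι → ℝ} (ht : Summable t) (ht0 : ∀ j, 0 < t j) (ht1 : ∀ j, t j ≤ 1 / 2)
    (hN : Tendsto N l atTop) :
    Tendsto (fun i => ∑' j, (exp (-(N i * t j)) - (1 - t j) ^ N i)) l (𝓝 0) := by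
  have hN0 : ∀ᶠ i in l, 0 ≤ N i := hN.eventually_ge_atTop 0
  have hle (j : ℕ) {i : ι} (hi : 0 ≤ N i) :
      0 ≤ exp (-(N i * t j)) - (1 - t j) ^ N i ∧ exp (-(N i * t j)) - (1 - t j) ^ N i ≤
        exp (-(N i * t j)) ∧ exp (-(N i * t j)) - (1 - t j) ^ N i ≤ 2 * t j :=
    ⟨sub_nonneg.mpr (one_sub_rpow_le_exp_neg_mul (by linarith [ht1 j]) hi),
      sub_le_self _ (rpow_nonneg (by linarith [ht1 j]) _),
      exp_neg_mul_sub_one_sub_rpow_le (ht0 j).le (ht1 j) hi⟩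
  simpa using tendsto_tsum_of_dominated_convergence (ht.mul_left 2)
    (fun j => tendsto_of_tendsto_of_tendsto_of_le_of_le' tendsto_const_nhds
      (tendsto_exp_neg_atTop_nhds_zero.comp (hN.atTop_mul_const (ht0 j)))
      (hN0.mono fun i hi => (hle j hi).1) (hN0.mono fun i hi => (hle j hi).2.1))
    (hN0.mono fun i hi j => by
      rw [norm_of_nonneg (hle j hi).1]; exact (hle j hi).2.2)

theorem summable_one_sub_exp_neg {u : ℕ → ℝ} (hu : Summable u) (hu0 : ∀ j, 0 ≤ u j) :
    Summable fun j => 1 - exp (-u j) :=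
  hu.of_nonneg_of_le (fun j => by linarith [exp_le_one_iff.mpr (neg_nonpos.mpr (hu0 j))])
    (fun j => by linarith [one_sub_le_exp_neg (u j)])

theorem Real.two_rpow_mul_inv_two_pow_succ (y : ℝ) (n : ℕ) :
    (2 : ℝ) ^ y * 2⁻¹ ^ (n + 1) = 2 ^ (y - (n + 1)) := by
  rw [rpow_sub two_pos, ← Nat.cast_add_one, rpow_natCast, inv_pow, div_eq_mul_inv]

theorem summable_inv_two_pow_succ : Summable fun j : ℕ => (2 : ℝ)⁻¹ ^ (j + 1) :=
  (summable_nat_add_iff 1).mpr (summable_geometric_of_lt_one (by norm_num) (by norm_num))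

theorem inv_two_pow_succ_le_half (n : ℕ) : (2 : ℝ)⁻¹ ^ (n + 1) ≤ 1 / 2 :=
  calc (2 : ℝ)⁻¹ ^ (n + 1) ≤ 2⁻¹ ^ 1 :=
        pow_le_pow_of_le_one (by norm_num) (by norm_num) (by omega)
    _ = 1 / 2 := by norm_num

theorem summable_two_rpow_sub_natCast_add_one (y : ℝ) :
    Summable fun j : ℕ => (2 : ℝ) ^ (y - (j + 1)) :=
  (summable_inv_two_pow_succ.mul_left (2 ^ y)).congr (Real.two_rpow_mul_inv_two_pow_succ y)

theorem summable_exp_neg_two_rpow_add_natCast (x : ℝ) :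
    Summable fun j : ℕ => exp (-(2 : ℝ) ^ (x + j)) := by
  refine ((summable_geometric_of_lt_one (by norm_num) (by norm_num : (2 : ℝ)⁻¹ < 1)).mul_left
    (2 ^ x)⁻¹).of_nonneg_of_le (fun j => (exp_pos _).le) fun j => ?_
  have hpos : 0 < (2 : ℝ) ^ (x + j) := rpow_pos_of_pos two_pos _
  calc exp (-(2 : ℝ) ^ (x + j)) ≤ ((2 : ℝ) ^ (x + j))⁻¹ := by
        rw [exp_neg]
        exact inv_anti₀ hpos (by linarith [add_one_le_exp ((2 : ℝ) ^ (x + j))])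
    _ = (2 ^ x)⁻¹ * 2⁻¹ ^ j := by rw [rpow_add two_pos, rpow_natCast, mul_inv, inv_pow]

noncomputable def fPoisson (y : ℝ) : ℝ :=
  ∑' j : ℕ, (1 - exp (-(2 : ℝ) ^ (y - (j + 1))))

theorem f_sub_fPoisson (y : ℝ) :
    f y - fPoisson y = ∑' j : ℕ,
      (exp (-(2 ^ y * 2⁻¹ ^ (j + 1))) - (1 - (2 : ℝ)⁻¹ ^ (j + 1)) ^ (2 : ℝ) ^ y) := by
  have hN : (0 : ℝ) ≤ 2 ^ y := (rpow_pos_of_pos two_pos y).le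
  rw [sub_eq_iff_eq_add, fPoisson, ← (summable_exp_neg_mul_sub_one_sub_rpow
      summable_inv_two_pow_succ (fun j => by positivity) inv_two_pow_succ_le_half hN).tsum_add
      (summable_one_sub_exp_neg (summable_two_rpow_sub_natCast_add_one y)
        fun j => (rpow_pos_of_pos two_pos _).le)]
  refine tsum_congr fun j => ?_
  rw [← Real.two_rpow_mul_inv_two_pow_succ]
  ring

theorem tendsto_f_sub_fPoisson : Tendsto (fun y => f y - fPoisson y) atTop (𝓝 0) := by
  simp_rw [f_sub_fPoisson]
  exact tendsto_tsum_exp_neg_mul_sub_one_sub_rpow summable_inv_two_pow_succ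
    (fun j => by positivity) inv_two_pow_succ_le_half
    (tendsto_rpow_atTop_of_base_gt_one 2 one_lt_two)

theorem fPoisson_add_natCast (x : ℝ) (k : ℕ) :
    fPoisson (x + k) = k - ∑ i ∈ range k, exp (-(2 : ℝ) ^ (x + i)) + fPoisson x := by
  rw [fPoisson, ← (summable_one_sub_exp_neg (summable_two_rpow_sub_natCast_add_one (x + k))
    fun j => (rpow_pos_of_pos two_pos _).le).sum_add_tsum_nat_add k, fPoisson]
  have head : ∑ j ∈ range k, (1 - exp (-(2 : ℝ) ^ (x + k - (j + 1)))) =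
      k - ∑ i ∈ range k, exp (-(2 : ℝ) ^ (x + i)) := by
    rw [sum_sub_distrib, sum_const, card_range, nsmul_one,
      ← sum_range_reflect (fun i => exp (-(2 : ℝ) ^ (x + i))) k]
    congr 1
    refine sum_congr rfl fun j hj => congrArg (fun y => exp (-(2 : ℝ) ^ y)) ?_
    rw [Nat.sub_sub, Nat.cast_sub (by simpa [add_comm] using mem_range.mp hj)]
    push_cast
    ring
  have tail (j : ℕ) : x + k - ((j + k : ℕ) + 1) = x - (j + 1) := by push_cast; ring
  simp only [head, tail]

theorem f_sub_linear_tendsto_general (x : ℝ) :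
    Tendsto (fun k : ℕ => f (x + k) - (x + k)) atTop
      (nhds (-x - (∑' j : ℕ, Real.exp (-(2 : ℝ) ^ (x + j)))
        + ∑' j : ℕ, (1 - Real.exp (-(2 : ℝ) ^ (x - (j + 1)))))) := by
  have hf : Tendsto (fun k : ℕ => f (x + k) - fPoisson (x + k)) atTop (𝓝 0) :=
    tendsto_f_sub_fPoisson.comp (tendsto_atTop_add_const_left _ x tendsto_natCast_atTop_atTop)
  have hsum : Tendsto (fun k => ∑ i ∈ range k, exp (-(2 : ℝ) ^ (x + i))) atTop
      (𝓝 (∑' j : ℕ, exp (-(2 : ℝ) ^ (x + j)))) :=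
    (summable_exp_neg_two_rpow_add_natCast x).hasSum.tendsto_sum_nat
  convert hf.add (tendsto_const_nhds (x := fPoisson x - x) |>.sub hsum) using 2
  · rw [fPoisson_add_natCast]
    ring
  · rw [fPoisson]
    ring

theorem f_sub_linear_tendsto (x : ℝ) (hx0 : 0 ≤ x) (hx1 : x < 1) :
    Tendsto (fun k : ℕ => f (x + k) - (x + k)) atTop
      (nhds (-x - (∑' j : ℕ, Real.exp (-(2 : ℝ) ^ (x + j)))
        + ∑' j : ℕ, (1 - Real.exp (-(2 : ℝ) ^ (x - (j + 1)))))) :=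
  f_sub_linear_tendsto_general x
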